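/- Let h : (0,b) → [0,∞) be non-increasing and right-continuous, b ∈ (0,∞], and fix t ∈ (0,b). Then the map u ↦ ∫₀ᵗ u*(s) h(s) ds is subadditive on nonnegative measurable functions u on a measure space (X,μ), i.e., ∫₀ᵗ (u+v)*(s) h(s) ds ≤ ∫₀ᵗ u*(s) h(s) ds + ∫₀ᵗ v*(s) h(s) ds. -/

import Mathlib

open MeasureTheory ENNReal Set

/-- The decreasing rearrangement of `f` with respect to `μ`. -/
noncomputable def rearr {X : Type*} [MeasurableSpace X] (μ : Measure X) (f : X → ℝ) (t : ℝ) : ℝ :=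
  sInf {l : ℝ | 0 ≤ l ∧ μ {x | l < |f x|} ≤ ENNReal.ofReal t}

/-- The maximal (average) decreasing rearrangement `f**`. -/
noncomputable def maxRearr {X : Type*} [MeasurableSpace X] (μ : Measure X) (f : X → ℝ) (t : ℝ) : ℝ :=
  (1 / t) * ∫ s in Set.Ioc (0:ℝ) t, rearr μ f s

/-!
Write `u*` for the decreasing rearrangement and `d_u(σ) = μ {|u| > σ}` for the distribution
function. By the layer-cake formula `∫₀ʸ u* = ∫₀^∞ min (y, d_u(σ)) dσ`, and splitting this integral
at a level `c ≥ 0` gives `∫₀ʸ u* ≤ c y + ∫ (u - c)₊ dμ`, with equality for `c = u*(y)`. Taking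
`c = u*(y) + v*(y)` for `u + v` and using `(u + v - a - b)₊ ≤ (u - a)₊ + (v - b)₊` shows that
`u ↦ ∫₀ʸ u*` is subadditive for every `y`.

For the weight, the layer-cake formula in `h` gives `∫₀ᵗ u* h = ∫₀^∞ (∫_{(0,t] ∩ {h > τ}} u*) dτ`.
Since `h` is non-increasing, each set `(0,t] ∩ {h > τ}` is `(0,c)` or `(0,c]` for some `c`, so the
inner integrals are subadditive in `u` by the first step.
-/

theorem volume_Ioc_inter_setOf_ofReal_lt {y : ℝ} (hy : 0 < y) (d : ℝ≥0∞) :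
    volume (Ioc 0 y ∩ {s : ℝ | ENNReal.ofReal s < d}) = min (ENNReal.ofReal y) d := by
  rcases le_or_gt d (ENNReal.ofReal y) with hd | hd
  · have hd_top : d ≠ ∞ := ne_top_of_le_ne_top ofReal_ne_top hd
    have hdy : d.toReal ≤ y := (toReal_le_toReal hd_top ofReal_ne_top).2 hd |>.trans_eq
      (toReal_ofReal hy.le)
    have hset : Ioc 0 y ∩ {s : ℝ | ENNReal.ofReal s < d} = Ioo 0 d.toReal := by
      ext s
      simp only [mem_inter_iff, mem_Ioc, mem_ofPred_eq, mem_Ioo]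
      constructor
      · rintro ⟨⟨hs, -⟩, hsd⟩
        exact ⟨hs, (ofReal_lt_iff_lt_toReal hs.le hd_top).1 hsd⟩
      · rintro ⟨hs, hsd⟩
        exact ⟨⟨hs, hsd.le.trans hdy⟩, (ofReal_lt_iff_lt_toReal hs.le hd_top).2 hsd⟩
    rw [hset, Real.volume_Ioo, sub_zero, ofReal_toReal hd_top, min_eq_right hd]
  · have hset : Ioc 0 y ∩ {s : ℝ | ENNReal.ofReal s < d} = Ioc 0 y :=
      inter_eq_left.2 fun s hs => (ofReal_le_ofReal hs.2).trans_lt hd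
    rw [hset, Real.volume_Ioc, sub_zero, min_eq_left hd.le]

theorem setLIntegral_eq_of_Ioo_subset_of_subset_Ioc {α : Type*} [MeasurableSpace α]
    [PartialOrder α] {μ : Measure α} [NullSingletonClass μ] {f : α → ℝ≥0∞} {S : Set α} {a b : α}
    (hIoo : Ioo a b ⊆ S) (hIoc : S ⊆ Ioc a b) :
    ∫⁻ x in S, f x ∂μ = ∫⁻ x in Ioc a b, f x ∂μ :=
  le_antisymm (lintegral_mono_set hIoc)
    ((setLIntegral_congr Ioo_ae_eq_Ioc).symm.le.trans (lintegral_mono_set hIoo))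

theorem lintegral_mul_ofReal_eq_lintegral_superlevel {α : Type*} [MeasurableSpace α]
    {ν : Measure α} {g : α → ℝ≥0∞} {h : α → ℝ} (hg : AEMeasurable g ν) (hh : Measurable h) :
    ∫⁻ a, g a * ENNReal.ofReal (h a) ∂ν = ∫⁻ τ in Ioi 0, ∫⁻ a in {a | τ < h a}, g a ∂ν := by
  have hmeas : Measurable fun a => max (h a) 0 := hh.max measurable_const
  calc ∫⁻ a, g a * ENNReal.ofReal (h a) ∂ν
      = ∫⁻ a, ENNReal.ofReal (max (h a) 0) ∂ν.withDensity g := by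
        rw [lintegral_withDensity_eq_lintegral_mul₀ hg hmeas.ennreal_ofReal.aemeasurable]
        simp only [Pi.mul_apply, ofReal_max, ofReal_zero, max_zero]
    _ = ∫⁻ τ in Ioi 0, ν.withDensity g {a | τ < max (h a) 0} :=
        lintegral_eq_lintegral_meas_lt _ (ae_of_all _ fun _ => le_max_right _ _)
          hmeas.aemeasurable
    _ = ∫⁻ τ in Ioi 0, ∫⁻ a in {a | τ < h a}, g a ∂ν := by
        refine setLIntegral_congr_fun measurableSet_Ioi fun τ hτ => ?_
        have hset : {a | τ < max (h a) 0} = {a | τ < h a} := by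
          ext a
          simp only [mem_ofPred_eq, lt_max_iff, not_lt.2 (mem_Ioi.1 hτ).le, or_false]
        have hlev : MeasurableSet {a | τ < h a} := hh measurableSet_Ioi
        rw [hset, withDensity_apply _ hlev]

theorem exists_Ioo_subset_superlevel_subset_Ioc {h : ℝ → ℝ} {t : ℝ}
    (hh : AntitoneOn h (Ioc 0 t)) (τ : ℝ) :
    ∃ c, Ioo 0 c ⊆ {s | τ < h s} ∩ Ioc 0 t ∧ {s | τ < h s} ∩ Ioc 0 t ⊆ Ioc 0 c := by
  set I := {s | τ < h s} ∩ Ioc 0 t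
  have hbdd : BddAbove (insert 0 I) := (bddAbove_Ioc.mono inter_subset_right).insert 0
  refine ⟨sSup (insert 0 I), fun s hs => ?_,
    fun s hs => ⟨hs.2.1, le_csSup hbdd (mem_insert_of_mem _ hs)⟩⟩
  obtain ⟨a, ha, hsa⟩ := exists_lt_of_lt_csSup (insert_nonempty 0 I) hs.2
  rcases ha with rfl | ⟨hτa, ha⟩
  · exact absurd hs.1 hsa.not_gt
  · have hs' : s ∈ Ioc 0 t := ⟨hs.1, hsa.le.trans ha.2⟩
    exact ⟨hτa.trans_le (hh hs' ha hsa.le), hs'⟩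

section Rearrangement

variable {X : Type*} [MeasurableSpace X]

noncomputable def distribution (μ : Measure X) (f : X → ℝ) (σ : ℝ) : ℝ≥0∞ :=
  μ {x | σ < |f x|}

def rearrLevels (μ : Measure X) (f : X → ℝ) (s : ℝ) : Set ℝ :=
  {l | 0 ≤ l ∧ distribution μ f l ≤ ENNReal.ofReal s}

variable {μ : Measure X} {f g u v : X → ℝ}

theorem rearr_eq_sInf_rearrLevels (μ : Measure X) (f : X → ℝ) (s : ℝ) :
    rearr μ f s = sInf (rearrLevels μ f s) := rfl

theorem distribution_antitone (μ : Measure X) (f : X → ℝ) : Antitone (distribution μ f) :=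
  fun _ _ hσ => measure_mono fun _ hx => hσ.trans_lt hx

theorem distribution_add_le (f g : X → ℝ) (a b : ℝ) :
    distribution μ (fun x => f x + g x) (a + b) ≤ distribution μ f a + distribution μ g b := by
  refine (measure_mono fun x hx => ?_).trans (measure_union_le _ _)
  simp only [mem_ofPred_eq, mem_union] at hx ⊢
  by_contra! hx'
  linarith [abs_add_le (f x) (g x)]

theorem distribution_add_ne_top {Lu Lv : ℝ} (hu_fin : distribution μ u Lu ≠ ∞)
    (hv_fin : distribution μ v Lv ≠ ∞) : distribution μ (fun x => u x + v x) (Lu + Lv) ≠ ∞ :=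
  ne_top_of_le_ne_top (add_ne_top.2 ⟨hu_fin, hv_fin⟩) (distribution_add_le u v Lu Lv)

theorem rearrLevels_mono (μ : Measure X) (f : X → ℝ) {s s' : ℝ} (hs : s ≤ s') :
    rearrLevels μ f s ⊆ rearrLevels μ f s' :=
  fun _ hl => ⟨hl.1, hl.2.trans (ofReal_le_ofReal hs)⟩

theorem rearrLevels_subset_of_abs_le (hfg : ∀ x, |f x| ≤ |g x|) (s : ℝ) :
    rearrLevels μ g s ⊆ rearrLevels μ f s :=
  fun _ hl => ⟨hl.1, (measure_mono fun x hx => hx.trans_le (hfg x)).trans hl.2⟩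

theorem rearr_nonneg (μ : Measure X) (f : X → ℝ) (s : ℝ) : 0 ≤ rearr μ f s :=
  Real.sInf_nonneg fun _ hl => hl.1

theorem rearr_le_of_distribution_le {s σ : ℝ} (hσ : 0 ≤ σ)
    (hd : distribution μ f σ ≤ ENNReal.ofReal s) : rearr μ f s ≤ σ :=
  csInf_le ⟨0, fun _ hl => hl.1⟩ ⟨hσ, hd⟩

theorem rearr_eq_zero_of_abs_le {s t : ℝ} (hfg : ∀ x, |f x| ≤ |g x|)
    (hf : rearrLevels μ f t = ∅) (hs : s ≤ t) : rearr μ g s = 0 := by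
  have hempty : rearrLevels μ g s = ∅ := subset_empty_iff.1 <|
    hf ▸ (rearrLevels_subset_of_abs_le hfg s).trans (rearrLevels_mono μ f hs)
  rw [rearr_eq_sInf_rearrLevels, hempty, Real.sInf_empty]

/-- If `u` or `v` admits no level at `t`, `rearr μ (u + v)` takes the junk value `sInf ∅ = 0`
on `(-∞, t]`. -/
theorem rearr_add_eq_zero (hu0 : ∀ x, 0 ≤ u x) (hv0 : ∀ x, 0 ≤ v x) {s t : ℝ}
    (hlev : ¬((rearrLevels μ u t).Nonempty ∧ (rearrLevels μ v t).Nonempty)) (hs : s ≤ t) :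
    rearr μ (fun x => u x + v x) s = 0 := by
  rw [not_and_or, not_nonempty_iff_eq_empty, not_nonempty_iff_eq_empty] at hlev
  rcases hlev with hempty | hempty
  · exact rearr_eq_zero_of_abs_le
      (fun x => abs_le_abs_of_nonneg (hu0 x) (le_add_of_nonneg_right (hv0 x))) hempty hs
  · exact rearr_eq_zero_of_abs_le
      (fun x => abs_le_abs_of_nonneg (hv0 x) (le_add_of_nonneg_left (hu0 x))) hempty hs

theorem rearrLevels_nonempty (hf : Measurable f) {L s : ℝ} (hfin : distribution μ f L ≠ ∞)
    (hs : 0 < s) : (rearrLevels μ f s).Nonempty := by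
  have hlim := tendsto_measure_iInter_atTop (μ := μ) (s := fun n : ℕ => {x | (n : ℝ) < |f x|})
    (fun _ => (measurableSet_lt measurable_const hf.abs).nullMeasurableSet)
    (fun _ _ hmn _ hx => mem_ofPred.2 ((Nat.cast_le.2 hmn).trans_lt (mem_ofPred.1 hx)))
    ⟨⌈L⌉₊, ne_top_of_le_ne_top hfin (distribution_antitone μ f (Nat.le_ceil L))⟩
  have hempty : ⋂ n : ℕ, {x | (n : ℝ) < |f x|} = ∅ :=
    eq_empty_of_forall_notMem fun x hx =>
      (exists_nat_ge |f x|).elim fun n hn => (mem_iInter.1 hx n).not_ge hn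
  rw [hempty, measure_empty] at hlim
  obtain ⟨n, hn⟩ := (hlim.eventually_lt_const (ofReal_pos.2 hs)).exists
  exact ⟨n, n.cast_nonneg, hn.le⟩

/-- Right-continuity of the distribution function, read through `rearr`. -/
theorem distribution_le_of_rearr_le {s σ : ℝ} (hne : (rearrLevels μ f s).Nonempty)
    (hr : rearr μ f s ≤ σ) : distribution μ f σ ≤ ENNReal.ofReal s := by
  have hunion : {x | σ < |f x|} = ⋃ n : ℕ, {x | σ + 1 / (n + 1) < |f x|} := by
    ext x
    simp only [mem_ofPred_eq, mem_iUnion]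
    refine ⟨fun hx => ?_,
      fun ⟨n, hn⟩ => (le_add_of_nonneg_right Nat.one_div_pos_of_nat.le).trans_lt hn⟩
    obtain ⟨n, hn⟩ := exists_nat_one_div_lt (sub_pos.2 hx)
    exact ⟨n, by linarith⟩
  have hmono : Monotone fun n : ℕ => {x | σ + 1 / (n + 1) < |f x|} := fun n m hnm x hx => by
    simp only [mem_ofPred] at hx ⊢
    refine lt_of_le_of_lt ?_ hx
    gcongr
  have hlevel (n : ℕ) : distribution μ f (σ + 1 / (n + 1)) ≤ ENNReal.ofReal s := by
    obtain ⟨l, hl, hlt⟩ :=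
      exists_lt_of_csInf_lt hne (hr.trans_lt (lt_add_of_pos_right σ Nat.one_div_pos_of_nat))
    exact (distribution_antitone μ f hlt.le).trans hl.2
  change μ {x | σ < |f x|} ≤ _
  rw [hunion, hmono.measure_iUnion]
  exact iSup_le hlevel

theorem lt_rearr_iff {s σ : ℝ} (hne : (rearrLevels μ f s).Nonempty) (hσ : 0 ≤ σ) :
    σ < rearr μ f s ↔ ENNReal.ofReal s < distribution μ f σ := by
  rw [← not_le, ← not_le]
  exact not_congr ⟨distribution_le_of_rearr_le hne, rearr_le_of_distribution_le hσ⟩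

theorem rearr_antitoneOn (hf : Measurable f) {L : ℝ} (hfin : distribution μ f L ≠ ∞) :
    AntitoneOn (rearr μ f) (Ioi 0) := fun _ hs _ _ hss' =>
  csInf_le_csInf ⟨0, fun _ hl => hl.1⟩ (rearrLevels_nonempty hf hfin hs) (rearrLevels_mono μ f hss')

theorem aemeasurable_rearr (hf : Measurable f) {L : ℝ} (hfin : distribution μ f L ≠ ∞) (y : ℝ) :
    AEMeasurable (rearr μ f) (volume.restrict (Ioc 0 y)) :=
  aemeasurable_restrict_of_antitoneOn measurableSet_Ioc
    ((rearr_antitoneOn hf hfin).mono Ioc_subset_Ioi_self)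

theorem lintegral_rearr_eq_lintegral_min_distribution (hf : Measurable f) {L : ℝ}
    (hfin : distribution μ f L ≠ ∞) {y : ℝ} (hy : 0 < y) :
    ∫⁻ s in Ioc 0 y, ENNReal.ofReal (rearr μ f s) =
      ∫⁻ σ in Ioi 0, min (ENNReal.ofReal y) (distribution μ f σ) := by
  rw [lintegral_eq_lintegral_meas_lt _ (ae_of_all _ (rearr_nonneg μ f))
    (aemeasurable_rearr hf hfin y)]
  refine setLIntegral_congr_fun measurableSet_Ioi fun σ hσ => ?_
  have hset : {s | σ < rearr μ f s} ∩ Ioc 0 y =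
      Ioc 0 y ∩ {s | ENNReal.ofReal s < distribution μ f σ} := by
    ext s
    simp only [mem_inter_iff, mem_ofPred_eq, mem_Ioc]
    exact and_comm.trans (and_congr_right fun hs =>
      lt_rearr_iff (rearrLevels_nonempty hf hfin hs.1) hσ.le)
  rw [Measure.restrict_apply' measurableSet_Ioc, hset, volume_Ioc_inter_setOf_ofReal_lt hy]

theorem lintegral_ofReal_sub_eq_lintegral_distribution (hf : Measurable f) (hf0 : ∀ x, 0 ≤ f x)
    (c : ℝ) : ∫⁻ x, ENNReal.ofReal (f x - c) ∂μ = ∫⁻ σ in Ioi c, distribution μ f σ := by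
  have hmeas : Measurable fun x => max (f x - c) 0 := (hf.sub_const c).max measurable_const
  calc ∫⁻ x, ENNReal.ofReal (f x - c) ∂μ = ∫⁻ x, ENNReal.ofReal (max (f x - c) 0) ∂μ := by
        simp only [ofReal_max, ofReal_zero, max_zero]
    _ = ∫⁻ τ in Ioi 0, μ {x | τ < max (f x - c) 0} :=
        lintegral_eq_lintegral_meas_lt μ (ae_of_all _ fun _ => le_max_right _ _) hmeas.aemeasurable
    _ = ∫⁻ τ in Ioi 0, distribution μ f (τ + c) := by
        refine setLIntegral_congr_fun measurableSet_Ioi fun τ hτ => congrArg μ ?_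
        ext x
        simp only [mem_ofPred_eq, lt_max_iff, abs_of_nonneg (hf0 x), lt_sub_iff_add_lt,
          not_lt.2 (mem_Ioi.1 hτ).le, or_false]
    _ = ∫⁻ σ in Ioi c, distribution μ f σ := by
        simpa using (measurePreserving_add_right volume c).setLIntegral_comp_preimage_emb
          (measurableEmbedding_addRight c) (distribution μ f) (Ioi c)

theorem lintegral_rearr_le_mul_add (hf : Measurable f) (hf0 : ∀ x, 0 ≤ f x) {L : ℝ}
    (hfin : distribution μ f L ≠ ∞) {c y : ℝ} (hc : 0 ≤ c) (hy : 0 < y) :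
    ∫⁻ s in Ioc 0 y, ENNReal.ofReal (rearr μ f s) ≤
      ENNReal.ofReal c * ENNReal.ofReal y + ∫⁻ x, ENNReal.ofReal (f x - c) ∂μ := by
  rw [lintegral_rearr_eq_lintegral_min_distribution hf hfin hy,
    lintegral_ofReal_sub_eq_lintegral_distribution hf hf0, ← Ioc_union_Ioi_eq_Ioi hc,
    lintegral_union measurableSet_Ioi (Ioc_disjoint_Ioi le_rfl)]
  gcongr
  · calc ∫⁻ σ in Ioc 0 c, min (ENNReal.ofReal y) (distribution μ f σ)
        ≤ ∫⁻ _ in Ioc 0 c, ENNReal.ofReal y := lintegral_mono fun _ => min_le_left _ _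
      _ = ENNReal.ofReal c * ENNReal.ofReal y := by
        rw [setLIntegral_const, Real.volume_Ioc, sub_zero, mul_comm]
  · exact min_le_right _ _

theorem lintegral_rearr_eq_mul_add (hf : Measurable f) (hf0 : ∀ x, 0 ≤ f x) {L : ℝ}
    (hfin : distribution μ f L ≠ ∞) {y : ℝ} (hy : 0 < y) :
    ∫⁻ s in Ioc 0 y, ENNReal.ofReal (rearr μ f s) =
      ENNReal.ofReal (rearr μ f y) * ENNReal.ofReal y +
        ∫⁻ x, ENNReal.ofReal (f x - rearr μ f y) ∂μ := by
  set a := rearr μ f y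
  have hne : (rearrLevels μ f y).Nonempty := rearrLevels_nonempty hf hfin hy
  rw [lintegral_rearr_eq_lintegral_min_distribution hf hfin hy,
    lintegral_ofReal_sub_eq_lintegral_distribution hf hf0,
    ← Ioc_union_Ioi_eq_Ioi (rearr_nonneg μ f y),
    lintegral_union measurableSet_Ioi (Ioc_disjoint_Ioi le_rfl),
    setLIntegral_congr Ioo_ae_eq_Ioc.symm]
  congr 1
  · calc ∫⁻ σ in Ioo 0 a, min (ENNReal.ofReal y) (distribution μ f σ)
        = ∫⁻ _ in Ioo 0 a, ENNReal.ofReal y :=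
          setLIntegral_congr_fun measurableSet_Ioo fun σ hσ =>
            min_eq_left ((lt_rearr_iff hne hσ.1.le).1 hσ.2).le
      _ = ENNReal.ofReal a * ENNReal.ofReal y := by
        rw [setLIntegral_const, Real.volume_Ioo, sub_zero, mul_comm]
  · exact setLIntegral_congr_fun measurableSet_Ioi fun σ hσ =>
      min_eq_right (distribution_le_of_rearr_le hne (le_of_lt hσ))

theorem lintegral_rearr_add_le (hu : Measurable u) (hv : Measurable v) (hu0 : ∀ x, 0 ≤ u x)
    (hv0 : ∀ x, 0 ≤ v x) {Lu Lv : ℝ} (hu_fin : distribution μ u Lu ≠ ∞)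
    (hv_fin : distribution μ v Lv ≠ ∞) (y : ℝ) :
    ∫⁻ s in Ioc 0 y, ENNReal.ofReal (rearr μ (fun x => u x + v x) s) ≤
      (∫⁻ s in Ioc 0 y, ENNReal.ofReal (rearr μ u s)) +
        ∫⁻ s in Ioc 0 y, ENNReal.ofReal (rearr μ v s) := by
  rcases le_or_gt y 0 with hy | hy
  · simp [Ioc_eq_empty_of_le hy]
  set a := rearr μ u y
  set b := rearr μ v y
  have htail : ∫⁻ x, ENNReal.ofReal (u x + v x - (a + b)) ∂μ ≤
      ∫⁻ x, ENNReal.ofReal (u x - a) ∂μ + ∫⁻ x, ENNReal.ofReal (v x - b) ∂μ := by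
    rw [← lintegral_add_left (hu.sub_const a).ennreal_ofReal]
    refine lintegral_mono fun x => ?_
    rw [add_sub_add_comm]
    exact ofReal_add_le
  calc ∫⁻ s in Ioc 0 y, ENNReal.ofReal (rearr μ (fun x => u x + v x) s)
      ≤ ENNReal.ofReal (a + b) * ENNReal.ofReal y +
          ∫⁻ x, ENNReal.ofReal (u x + v x - (a + b)) ∂μ :=
        lintegral_rearr_le_mul_add (hu.add hv) (fun x => add_nonneg (hu0 x) (hv0 x))
          (distribution_add_ne_top hu_fin hv_fin)
          (add_nonneg (rearr_nonneg μ u y) (rearr_nonneg μ v y)) hy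
    _ ≤ (ENNReal.ofReal a * ENNReal.ofReal y + ∫⁻ x, ENNReal.ofReal (u x - a) ∂μ) +
          (ENNReal.ofReal b * ENNReal.ofReal y + ∫⁻ x, ENNReal.ofReal (v x - b) ∂μ) := by
        rw [ofReal_add (rearr_nonneg μ u y) (rearr_nonneg μ v y), add_mul, add_add_add_comm]
        gcongr
    _ = _ := by
        rw [lintegral_rearr_eq_mul_add hu hu0 hu_fin hy,
          lintegral_rearr_eq_mul_add hv hv0 hv_fin hy]

theorem lintegral_rearr_add_mul_le_of_antitoneOn {h : ℝ → ℝ} {t : ℝ} (hm : Measurable h)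
    (hh : AntitoneOn h (Ioc 0 t)) (hu : Measurable u) (hv : Measurable v) (hu0 : ∀ x, 0 ≤ u x)
    (hv0 : ∀ x, 0 ≤ v x) {Lu Lv : ℝ} (hu_fin : distribution μ u Lu ≠ ∞)
    (hv_fin : distribution μ v Lv ≠ ∞) :
    ∫⁻ s in Ioc 0 t, ENNReal.ofReal (rearr μ (fun x => u x + v x) s * h s) ≤
      (∫⁻ s in Ioc 0 t, ENNReal.ofReal (rearr μ u s * h s)) +
        ∫⁻ s in Ioc 0 t, ENNReal.ofReal (rearr μ v s * h s) := by
  have hlayers {f : X → ℝ} (hf : Measurable f) {L : ℝ} (hfin : distribution μ f L ≠ ∞) :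
      ∫⁻ s in Ioc 0 t, ENNReal.ofReal (rearr μ f s * h s) =
        ∫⁻ τ in Ioi 0, ∫⁻ s in {s | τ < h s} ∩ Ioc 0 t, ENNReal.ofReal (rearr μ f s) := by
    simp only [ofReal_mul (rearr_nonneg μ f _)]
    rw [lintegral_mul_ofReal_eq_lintegral_superlevel
      (aemeasurable_rearr hf hfin t).ennreal_ofReal hm]
    refine lintegral_congr fun τ => ?_
    have hlev : MeasurableSet {s | τ < h s} := hm measurableSet_Ioi
    rw [Measure.restrict_restrict hlev]
  have hanti : Antitone fun τ => ∫⁻ s in {s | τ < h s} ∩ Ioc 0 t, ENNReal.ofReal (rearr μ u s) :=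
    fun _ _ hτ => lintegral_mono_set fun s hs => ⟨hτ.trans_lt hs.1, hs.2⟩
  rw [hlayers (f := fun x => u x + v x) (hu.add hv) (distribution_add_ne_top hu_fin hv_fin),
    hlayers hu hu_fin, hlayers hv hv_fin, ← lintegral_add_left' hanti.measurable.aemeasurable]
  refine lintegral_mono fun τ => ?_
  obtain ⟨c, hIoo, hIoc⟩ := exists_Ioo_subset_superlevel_subset_Ioc hh τ
  simp only [setLIntegral_eq_of_Ioo_subset_of_subset_Ioc hIoo hIoc]
  exact lintegral_rearr_add_le hu hv hu0 hv0 hu_fin hv_fin c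

end Rearrangement

theorem stmt4_general {X : Type*} [MeasurableSpace X] (μ : Measure X) (b : ℝ≥0∞)
    (h : ℝ → ℝ) (hm : Measurable h)
    (hmono : AntitoneOn h {s : ℝ | 0 < s ∧ ENNReal.ofReal s < b})
    (t : ℝ) (ht' : ENNReal.ofReal t < b)
    (u v : X → ℝ) (hu : Measurable u) (hv : Measurable v)
    (hu0 : ∀ x, 0 ≤ u x) (hv0 : ∀ x, 0 ≤ v x) :
    ∫⁻ s in Set.Ioc (0:ℝ) t, ENNReal.ofReal (rearr μ (fun x => u x + v x) s * h s) ≤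
      (∫⁻ s in Set.Ioc (0:ℝ) t, ENNReal.ofReal (rearr μ u s * h s)) +
      ∫⁻ s in Set.Ioc (0:ℝ) t, ENNReal.ofReal (rearr μ v s * h s) := by
  by_cases hlev : (rearrLevels μ u t).Nonempty ∧ (rearrLevels μ v t).Nonempty
  · obtain ⟨⟨Lu, -, hLu⟩, ⟨Lv, -, hLv⟩⟩ := hlev
    exact lintegral_rearr_add_mul_le_of_antitoneOn hm
      (hmono.mono fun s hs => ⟨hs.1, (ofReal_le_ofReal hs.2).trans_lt ht'⟩) hu hv hu0 hv0
      (ne_top_of_le_ne_top ofReal_ne_top hLu) (ne_top_of_le_ne_top ofReal_ne_top hLv)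
  · rw [setLIntegral_eq_zero measurableSet_Ioc fun s hs => by
      simp [rearr_add_eq_zero hu0 hv0 hlev hs.2]]
    exact zero_le

theorem stmt4 {X : Type*} [MeasurableSpace X] (μ : Measure X) (b : ℝ≥0∞) (hb : 0 < b)
    (h : ℝ → ℝ) (hm : Measurable h)
    (hmono : AntitoneOn h {s : ℝ | 0 < s ∧ ENNReal.ofReal s < b})
    (hcont : ∀ s : ℝ, 0 < s → ENNReal.ofReal s < b → ContinuousWithinAt h (Set.Ici s) s)
    (hpos : ∀ s : ℝ, 0 < s → ENNReal.ofReal s < b → 0 ≤ h s)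
    (t : ℝ) (ht : 0 < t) (ht' : ENNReal.ofReal t < b)
    (u v : X → ℝ) (hu : Measurable u) (hv : Measurable v)
    (hu0 : ∀ x, 0 ≤ u x) (hv0 : ∀ x, 0 ≤ v x) :
    ∫⁻ s in Set.Ioc (0:ℝ) t, ENNReal.ofReal (rearr μ (fun x => u x + v x) s * h s) ≤
      (∫⁻ s in Set.Ioc (0:ℝ) t, ENNReal.ofReal (rearr μ u s * h s)) +
      ∫⁻ s in Set.Ioc (0:ℝ) t, ENNReal.ofReal (rearr μ v s * h s) :=
  stmt4_general μ b h hm hmono t ht' u v hu hv hu0 hv0
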